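/- The function f : R_{≥0} → R given by f(z) = erfc(1/√z) · z is convex on (0, ∞), where erfc(w) denotes P_{g∼N(0,1)}(|g| > w). Equivalently, its second derivative equals e^{−1/(2z)}(1+z)/(2 z^{5/2} √(2π)), which is nonnegative for z > 0. -/

import Mathlib

/-!
On `(0, ∞)` we have `erfc (1/√z) * z = z * (1 - 2 Φ₀(1/√z))` with `Φ₀ w = ∫₀ʷ φ` for the standard
Gaussian density `φ`. Its derivative is `G (1/√z)` with `G u = 1 - 2 Φ₀(u) + u φ(u)`, and
`G' u = -(1 + u²) φ(u) ≤ 0`. So the derivative is the composition of two decreasing maps,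
hence increasing, and the function is convex.
-/

/-- The two-sided Gaussian tail `erfc w = P_{g ∼ N(0,1)}(|g| > w)`; for `w ≥ 0` this is
`2 ∫_w^∞ (1/√(2π)) e^{-x²/2} dx`. -/
noncomputable def erfc (w : ℝ) : ℝ :=
  (ProbabilityTheory.gaussianReal 0 1 {x : ℝ | w < |x|}).toReal

open Real MeasureTheory ProbabilityTheory Set

lemma continuous_gaussianPDFReal (μ : ℝ) (v : NNReal) : Continuous (gaussianPDFReal μ v) := by
  rw [gaussianPDFReal_def]
  fun_prop

lemma gaussianPDFReal_zero_neg (v : NNReal) (x : ℝ) :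
    gaussianPDFReal 0 v (-x) = gaussianPDFReal 0 v x := by
  simp [gaussianPDFReal]

lemma gaussianPDFReal_zero_one (x : ℝ) :
    gaussianPDFReal 0 1 x = (√(2 * π))⁻¹ * rexp (-x ^ 2 / 2) := by
  simp [gaussianPDFReal]

lemma hasDerivAt_mul_gaussianPDFReal_zero_one (u : ℝ) :
    HasDerivAt (fun u => u * gaussianPDFReal 0 1 u) ((1 - u ^ 2) * gaussianPDFReal 0 1 u) u := by
  have hexponent : HasDerivAt (fun u : ℝ => -u ^ 2 / 2) (-u) u :=
    ((hasDerivAt_pow 2 u).neg.div_const 2).congr_deriv (by push_cast; ring)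
  have h : HasDerivAt (fun u => (√(2 * π))⁻¹ * (u * rexp (-u ^ 2 / 2)))
      ((√(2 * π))⁻¹ * (1 * rexp (-u ^ 2 / 2) + u * (rexp (-u ^ 2 / 2) * -u))) u :=
    ((hasDerivAt_id' u).mul hexponent.exp).const_mul _
  simp only [gaussianPDFReal_zero_one]
  convert h using 1
  · ext v
    ring
  · ring

noncomputable def halfCentralMass (w : ℝ) : ℝ := ∫ t in (0 : ℝ)..w, gaussianPDFReal 0 1 t

lemma hasDerivAt_halfCentralMass (w : ℝ) :
    HasDerivAt halfCentralMass (gaussianPDFReal 0 1 w) w :=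
  (continuous_gaussianPDFReal 0 1).integral_hasStrictDerivAt 0 w |>.hasDerivAt

lemma integral_neg_to_self_gaussianPDFReal_zero_one (w : ℝ) :
    ∫ x in -w..w, gaussianPDFReal 0 1 x = 2 * halfCentralMass w := by
  have hint := (continuous_gaussianPDFReal 0 1).intervalIntegrable (μ := volume)
  have hsym : ∫ x in -w..0, gaussianPDFReal 0 1 x = halfCentralMass w := by
    have h := intervalIntegral.integral_comp_neg (a := 0) (b := w) (gaussianPDFReal 0 1)
    simp only [gaussianPDFReal_zero_neg, neg_zero] at h
    exact h.symm
  rw [← intervalIntegral.integral_add_adjacent_intervals (hint _ 0) (hint 0 _), hsym,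
    halfCentralMass]
  ring

lemma erfc_eq_one_sub_two_mul_halfCentralMass {w : ℝ} (hw : 0 ≤ w) :
    erfc w = 1 - 2 * halfCentralMass w := by
  have hcompl : {x : ℝ | w < |x|} = (Icc (-w) w)ᶜ := by
    ext x
    simp only [mem_ofPred_eq, mem_compl_iff, mem_Icc, ← abs_le, not_le]
  have hIcc : gaussianReal 0 1 (Icc (-w) w) = ENNReal.ofReal (2 * halfCentralMass w) := by
    rw [gaussianReal_apply_eq_integral 0 one_ne_zero, integral_Icc_eq_integral_Ioc,
      ← intervalIntegral.integral_of_le (by linarith),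
      integral_neg_to_self_gaussianPDFReal_zero_one]
  have hnonneg : 0 ≤ 2 * halfCentralMass w := by
    rw [← integral_neg_to_self_gaussianPDFReal_zero_one]
    exact intervalIntegral.integral_nonneg (by linarith) fun x _ => gaussianPDFReal_nonneg 0 1 x
  rw [erfc, hcompl, prob_compl_eq_one_sub measurableSet_Icc, hIcc,
    ENNReal.toReal_sub_of_le (hIcc ▸ prob_le_one) ENNReal.one_ne_top, ENNReal.toReal_one,
    ENNReal.toReal_ofReal hnonneg]

noncomputable def scaledTailSlope (u : ℝ) : ℝ :=
  1 - 2 * halfCentralMass u + u * gaussianPDFReal 0 1 u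

lemma hasDerivAt_scaledTailSlope (u : ℝ) :
    HasDerivAt scaledTailSlope (-((1 + u ^ 2) * gaussianPDFReal 0 1 u)) u := by
  have h := ((hasDerivAt_halfCentralMass u).const_mul 2).const_sub 1 |>.add
    (hasDerivAt_mul_gaussianPDFReal_zero_one u)
  exact h.congr_deriv (by ring)

lemma antitone_scaledTailSlope : Antitone scaledTailSlope :=
  antitone_of_hasDerivAt_nonpos hasDerivAt_scaledTailSlope fun u =>
    neg_nonpos.2 (mul_nonneg (by positivity) (gaussianPDFReal_nonneg 0 1 u))

lemma antitoneOn_inv_sqrt : AntitoneOn (fun z => (√z)⁻¹) (Ioi 0) := fun _ hx _ _ hxy =>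
  inv_anti₀ (sqrt_pos.2 hx) (sqrt_le_sqrt hxy)

lemma hasDerivAt_mul_one_sub_two_mul_halfCentralMass_inv_sqrt {z : ℝ} (hz : 0 < z) :
    HasDerivAt (fun z => z * (1 - 2 * halfCentralMass (√z)⁻¹)) (scaledTailSlope (√z)⁻¹) z := by
  have hs : 0 < √z := sqrt_pos.2 hz
  have hinv : HasDerivAt (fun z => (√z)⁻¹) (-(1 / (2 * √z)) / √z ^ 2) z :=
    (hasDerivAt_sqrt hz.ne').inv hs.ne'
  have h := (hasDerivAt_id' z).mul
    (((hasDerivAt_halfCentralMass _).comp z hinv).const_mul 2 |>.const_sub 1)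
  refine h.congr_deriv ?_
  rw [scaledTailSlope, Function.comp_apply]
  nth_rewrite 2 [← sq_sqrt hz.le]
  field_simp

lemma convexOn_of_hasDerivAt_of_monotoneOn {D : Set ℝ} (hD : Convex ℝ D) (hD' : IsOpen D)
    {f f' : ℝ → ℝ} (hf : ∀ x ∈ D, HasDerivAt f (f' x) x) (hf' : MonotoneOn f' D) :
    ConvexOn ℝ D f := by
  refine MonotoneOn.convexOn_of_deriv hD
    (fun x hx => (hf x hx).continuousAt.continuousWithinAt) ?_ ?_ <;> rw [hD'.interior_eq]
  · exact fun x hx => (hf x hx).differentiableAt.differentiableWithinAt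
  · exact hf'.congr fun x hx => ((hf x hx).deriv).symm

/-- the function `z ↦ erfc(1/√z) · z` is convex on `(0, ∞)`. -/
theorem stmt2 : ConvexOn ℝ (Set.Ioi (0 : ℝ)) (fun z => erfc (1 / Real.sqrt z) * z) := by
  have hconvex : ConvexOn ℝ (Ioi 0) fun z => z * (1 - 2 * halfCentralMass (√z)⁻¹) :=
    convexOn_of_hasDerivAt_of_monotoneOn (convex_Ioi 0) isOpen_Ioi
      (fun _ hz => hasDerivAt_mul_one_sub_two_mul_halfCentralMass_inv_sqrt hz)
      (antitone_scaledTailSlope.comp_antitoneOn antitoneOn_inv_sqrt)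
  refine hconvex.congr fun z _ => ?_
  rw [one_div, erfc_eq_one_sub_two_mul_halfCentralMass (inv_nonneg.2 (sqrt_nonneg z)), mul_comm]
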